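/- Let φ, F₁, F₂ be measurable with 0 ≤ φ ≤ 1, F₁ ≥ 0, F₂ ≥ 0 and ∫ min{F₁,F₂} dμ < ∞. Then ∫ (φ·F₁ + (1−φ)·F₂) dμ = ∫ min{F₁,F₂} dμ if and only if the indicator of {F₁ < F₂} ≤ φ ≤ the indicator of {F₁ ≤ F₂} holds μ-almost everywhere. -/

import Mathlib

/-!
Pointwise, `φ F₁ + (1 - φ) F₂ ≥ min F₁ F₂`, with equality exactly where
`I_{F₁ < F₂} ≤ φ ≤ I_{F₁ ≤ F₂}`. Since the integral of the smaller function is finite,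
equality of the two integrals forces almost-everywhere equality of the integrands.
-/

open MeasureTheory

section ConvexCombination

variable {R : Type*} [Ring R] [LinearOrder R] [IsStrictOrderedRing R] {t : R}

theorem min_le_mul_add_one_sub_mul (a b : R) (ht₀ : 0 ≤ t) (ht₁ : t ≤ 1) :
    min a b ≤ t * a + (1 - t) * b :=
  Convex.min_le_combo a b ht₀ (sub_nonneg.2 ht₁) (add_sub_cancel t 1)

theorem mul_add_one_sub_mul_eq_min_iff (a b : R) (ht₀ : 0 ≤ t) (ht₁ : t ≤ 1) :
    t * a + (1 - t) * b = min a b ↔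
      (if a < b then 1 else 0) ≤ t ∧ t ≤ (if a ≤ b then 1 else 0) := by
  rcases lt_trichotomy a b with hab | rfl | hab
  · have hgap : t * a + (1 - t) * b - min a b = (1 - t) * (b - a) := by
      rw [min_eq_left hab.le]; noncomm_ring
    rw [if_pos hab, if_pos hab.le, ← sub_eq_zero, hgap,
      mul_eq_zero_iff_right (sub_pos.2 hab).ne', sub_eq_zero, eq_comm, le_antisymm_iff]
    exact ⟨fun h => ⟨h.2, h.1⟩, fun h => ⟨h.2, h.1⟩⟩
  · simp only [lt_irrefl, le_refl, if_false, if_true, min_self]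
    exact ⟨fun _ => ⟨ht₀, ht₁⟩, fun _ => by noncomm_ring⟩
  · have hgap : t * a + (1 - t) * b - min a b = t * (a - b) := by
      rw [min_eq_right hab.le]; noncomm_ring
    rw [if_neg hab.not_gt, if_neg hab.not_ge, ← sub_eq_zero, hgap,
      mul_eq_zero_iff_right (sub_pos.2 hab).ne', le_antisymm_iff]
    exact ⟨fun h => ⟨ht₀, h.1⟩, fun h => ⟨h.2, ht₀⟩⟩

end ConvexCombination

theorem lintegral_eq_lintegral_iff_ae_eq_of_ae_le {α : Type*} [MeasurableSpace α] {μ : Measure α}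
    {f g : α → ENNReal} (hfg : f ≤ᵐ[μ] g) (hf : ∫⁻ x, f x ∂μ ≠ ⊤) (hg : AEMeasurable g μ) :
    ∫⁻ x, g x ∂μ = ∫⁻ x, f x ∂μ ↔ g =ᵐ[μ] f :=
  ⟨fun h => (ae_eq_of_ae_le_of_lintegral_le hfg hf hg h.le).symm, lintegral_congr_ae⟩

theorem stmt1_general {X : Type*} [MeasurableSpace X] (μ : Measure X)
    (φ F₁ F₂ : X → ℝ) (hφm : Measurable φ) (hF₁m : Measurable F₁) (hF₂m : Measurable F₂)
    (hφ0 : ∀ x, 0 ≤ φ x) (hφ1 : ∀ x, φ x ≤ 1)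
    (hF₁0 : ∀ x, 0 ≤ F₁ x) (hF₂0 : ∀ x, 0 ≤ F₂ x)
    (hmin : ∫⁻ x, ENNReal.ofReal (min (F₁ x) (F₂ x)) ∂μ < ⊤) :
    (∫⁻ x, ENNReal.ofReal (φ x * F₁ x + (1 - φ x) * F₂ x) ∂μ
        = ∫⁻ x, ENNReal.ofReal (min (F₁ x) (F₂ x)) ∂μ)
      ↔ (∀ᵐ x ∂μ,
          Set.indicator {x | F₁ x < F₂ x} (fun _ => (1 : ℝ)) x ≤ φ x
            ∧ φ x ≤ Set.indicator {x | F₁ x ≤ F₂ x} (fun _ => (1 : ℝ)) x) := by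
  have hle x : min (F₁ x) (F₂ x) ≤ φ x * F₁ x + (1 - φ x) * F₂ x :=
    min_le_mul_add_one_sub_mul _ _ (hφ0 x) (hφ1 x)
  have hmin₀ x : 0 ≤ min (F₁ x) (F₂ x) := le_min (hF₁0 x) (hF₂0 x)
  have hmeas : Measurable fun x => φ x * F₁ x + (1 - φ x) * F₂ x := by fun_prop
  rw [lintegral_eq_lintegral_iff_ae_eq_of_ae_le
    (ae_of_all _ fun x => ENNReal.ofReal_le_ofReal (hle x)) hmin.ne
    hmeas.ennreal_ofReal.aemeasurable]
  refine Filter.eventually_congr (ae_of_all _ fun x => ?_)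
  rw [ENNReal.ofReal_eq_ofReal_iff ((hmin₀ x).trans (hle x)) (hmin₀ x),
    mul_add_one_sub_mul_eq_min_iff _ _ (hφ0 x) (hφ1 x)]
  simp only [Set.indicator_apply, Set.mem_ofPred_eq]

/-- Lemma 1 (equality case): equality holds in the inequality
`∫ (φ·F₁ + (1−φ)·F₂) dμ ≥ ∫ min{F₁,F₂} dμ` if and only if
`I_{F₁ < F₂} ≤ φ ≤ I_{F₁ ≤ F₂}` μ-almost everywhere. -/
theorem stmt1 {X : Type*} [MeasurableSpace X] (μ : Measure X) [SigmaFinite μ]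
    (φ F₁ F₂ : X → ℝ) (hφm : Measurable φ) (hF₁m : Measurable F₁) (hF₂m : Measurable F₂)
    (hφ0 : ∀ x, 0 ≤ φ x) (hφ1 : ∀ x, φ x ≤ 1)
    (hF₁0 : ∀ x, 0 ≤ F₁ x) (hF₂0 : ∀ x, 0 ≤ F₂ x)
    (hmin : ∫⁻ x, ENNReal.ofReal (min (F₁ x) (F₂ x)) ∂μ < ⊤) :
    (∫⁻ x, ENNReal.ofReal (φ x * F₁ x + (1 - φ x) * F₂ x) ∂μ
        = ∫⁻ x, ENNReal.ofReal (min (F₁ x) (F₂ x)) ∂μ)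
      ↔ (∀ᵐ x ∂μ,
          Set.indicator {x | F₁ x < F₂ x} (fun _ => (1 : ℝ)) x ≤ φ x
            ∧ φ x ≤ Set.indicator {x | F₁ x ≤ F₂ x} (fun _ => (1 : ℝ)) x) :=
  stmt1_general μ φ F₁ F₂ hφm hF₁m hF₂m hφ0 hφ1 hF₁0 hF₂0 hmin
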